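/- arXiv:1601.08038 — 3 statements merged into one kernel-verified Lean document; each statement's English description precedes it below -/
import Mathlib

section
/- Let p, μ ∈ C¹((0,∞)) with μ(z) > 0 for all z, and define φ(z) = ∫₁^z μ(s)/s² ds. Suppose (ρ, u) is a C² solution of the one-dimensional compressible Navier–Stokes system ∂ₜρ + ∂ₓ(ρu) = 0, ∂ₜ(ρu) + ∂ₓ(ρu²) = ∂ₓ(μ(ρ)∂ₓu) − ∂ₓp(ρ) on [0,T] × ℝ with ρ > 0. Then v := u + ∂ₓ(φ(ρ)) satisfies pointwise ∂ₜ(ρv) + ∂ₓ(ρuv) + ∂ₓ(p(ρ)) = 0. -/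
/-!
Renormalizing the mass equation by `φ₁` with `φ₁' = μ / s` gives
`∂ₜφ₁(ρ) + u ∂ₓφ₁(ρ) + μ(ρ) ∂ₓu = 0`. Differentiating in `x` and exchanging `∂ₜ∂ₓ = ∂ₓ∂ₜ` yields
`∂ₜ(ρ ∂ₓφ(ρ)) + ∂ₓ(u ρ ∂ₓφ(ρ)) + ∂ₓ(μ(ρ) ∂ₓu) = 0`, because `ρ ∂ₓφ(ρ) = ∂ₓφ₁(ρ)`; adding the
momentum equation cancels the viscous term. The primitive `φ₁` never has to be formed: the exchange
of derivatives is used in the form `∂ₜ(h(ρ) ∂ₓρ) = ∂ₓ(h(ρ) ∂ₜρ)` with `h = μ / s`.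
-/

open Set intervalIntegral

open Function

noncomputable def partialT (f : ℝ → ℝ → ℝ) (t x : ℝ) : ℝ := deriv (fun s => f s x) t

noncomputable def partialX (f : ℝ → ℝ → ℝ) (t x : ℝ) : ℝ := deriv (fun y => f t y) x

section PartialDerivatives

variable {f : ℝ → ℝ → ℝ}

theorem hasDerivAt_partialT_fderiv (hf : Differentiable ℝ (uncurry f)) (t x : ℝ) :
    HasDerivAt (fun s => f s x) (fderiv ℝ (uncurry f) (t, x) (1, 0)) t :=
  have hslice : HasDerivAt (fun s => (s, x)) ((1 : ℝ), (0 : ℝ)) t :=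
    (hasDerivAt_id t).prodMk (hasDerivAt_const t x)
  ((hf (t, x)).hasFDerivAt.comp_hasDerivAt t hslice :)

theorem hasDerivAt_partialX_fderiv (hf : Differentiable ℝ (uncurry f)) (t x : ℝ) :
    HasDerivAt (fun y => f t y) (fderiv ℝ (uncurry f) (t, x) (0, 1)) x :=
  have hslice : HasDerivAt (fun y => (t, y)) ((0 : ℝ), (1 : ℝ)) x :=
    (hasDerivAt_const x t).prodMk (hasDerivAt_id x)
  ((hf (t, x)).hasFDerivAt.comp_hasDerivAt x hslice :)

theorem uncurry_partialT (hf : Differentiable ℝ (uncurry f)) :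
    uncurry (partialT f) = fun q => fderiv ℝ (uncurry f) q (1, 0) :=
  funext fun q => (hasDerivAt_partialT_fderiv hf q.1 q.2).deriv

theorem uncurry_partialX (hf : Differentiable ℝ (uncurry f)) :
    uncurry (partialX f) = fun q => fderiv ℝ (uncurry f) q (0, 1) :=
  funext fun q => (hasDerivAt_partialX_fderiv hf q.1 q.2).deriv

theorem hasDerivAt_partialT (hf : Differentiable ℝ (uncurry f)) (t x : ℝ) :
    HasDerivAt (fun s => f s x) (partialT f t x) t :=
  (hasDerivAt_partialT_fderiv hf t x).differentiableAt.hasDerivAt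

theorem hasDerivAt_partialX (hf : Differentiable ℝ (uncurry f)) (t x : ℝ) :
    HasDerivAt (fun y => f t y) (partialX f t x) x :=
  (hasDerivAt_partialX_fderiv hf t x).differentiableAt.hasDerivAt

variable {m n : WithTop ℕ∞}

theorem contDiff_partialT (hf : ContDiff ℝ n (uncurry f)) (hmn : m + 1 ≤ n) :
    ContDiff ℝ m (uncurry (partialT f)) := by
  rw [uncurry_partialT ((hf.of_le (le_add_self.trans hmn)).differentiable one_ne_zero)]
  exact (hf.fderiv_right hmn).clm_apply contDiff_const

theorem contDiff_partialX (hf : ContDiff ℝ n (uncurry f)) (hmn : m + 1 ≤ n) :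
    ContDiff ℝ m (uncurry (partialX f)) := by
  rw [uncurry_partialX ((hf.of_le (le_add_self.trans hmn)).differentiable one_ne_zero)]
  exact (hf.fderiv_right hmn).clm_apply contDiff_const

theorem partialT_partialX (hf : ContDiff ℝ 2 (uncurry f)) (t x : ℝ) :
    partialT (partialX f) t x = partialX (partialT f) t x := by
  have hf1 : Differentiable ℝ (uncurry f) := hf.differentiable two_ne_zero
  have hf' : DifferentiableAt ℝ (fderiv ℝ (uncurry f)) (t, x) :=
    (hf.fderiv_right (m := 1) (by norm_num)).differentiable one_ne_zero _
  rw [partialT, (hasDerivAt_partialT_fderiv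
      ((contDiff_partialX hf (m := 1) (by norm_num)).differentiable one_ne_zero) t x).deriv,
    partialX, (hasDerivAt_partialX_fderiv
      ((contDiff_partialT hf (m := 1) (by norm_num)).differentiable one_ne_zero) t x).deriv]
  rw [uncurry_partialX hf1, uncurry_partialT hf1, fderiv_clm_apply hf' (differentiableAt_const _),
    fderiv_clm_apply hf' (differentiableAt_const _)]
  simpa using hf.contDiffAt.isSymmSndFDerivAt (by simp) (1, 0) (0, 1)

end PartialDerivatives

theorem hasDerivAt_integral_of_continuousOn {g : ℝ → ℝ} {s : Set ℝ} {a b : ℝ}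
    (hs : IsOpen s) (hg : ContinuousOn g s) (hab : uIcc a b ⊆ s) :
    HasDerivAt (fun z => ∫ x in a..z, g x) (g b) b :=
  have hb : b ∈ s := hab right_mem_uIcc
  integral_hasDerivAt_right ((hg.mono hab).intervalIntegrable)
    (hg.stronglyMeasurableAtFilter hs b hb) (hg.continuousAt (hs.mem_nhds hb))

theorem partialT_comp_mul_partialX {f : ℝ → ℝ → ℝ} {h : ℝ → ℝ} (hf : ContDiff ℝ 2 (uncurry f))
    {t x : ℝ} (hh : DifferentiableAt ℝ h (f t x)) :
    partialT (fun t x => h (f t x) * partialX f t x) t x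
      = partialX (fun t x => h (f t x) * partialT f t x) t x := by
  have hf1 : Differentiable ℝ (uncurry f) := hf.differentiable two_ne_zero
  have hft : Differentiable ℝ (uncurry (partialT f)) :=
    (contDiff_partialT hf (m := 1) (by norm_num)).differentiable one_ne_zero
  have hfx : Differentiable ℝ (uncurry (partialX f)) :=
    (contDiff_partialX hf (m := 1) (by norm_num)).differentiable one_ne_zero
  have ht : HasDerivAt (fun s => h (f s x) * partialX f s x)
      (deriv h (f t x) * partialT f t x * partialX f t x
        + h (f t x) * partialT (partialX f) t x) t :=
    (hh.hasDerivAt.comp t (hasDerivAt_partialT hf1 t x)).mul (hasDerivAt_partialT hfx t x)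
  have hx : HasDerivAt (fun y => h (f t y) * partialT f t y)
      (deriv h (f t x) * partialX f t x * partialT f t x
        + h (f t x) * partialX (partialT f) t x) x :=
    (hh.hasDerivAt.comp x (hasDerivAt_partialX hf1 t x)).mul (hasDerivAt_partialX hft t x)
  rw [partialT, partialX, ht.deriv, hx.deriv, partialT_partialX hf]
  ring

/-- `ρ ∂ₓφ(ρ)`, written as `∂ₓφ₁(ρ)` with `φ₁' = μ / s`. -/
noncomputable def bdCorrection (μ : ℝ → ℝ) (ρ : ℝ → ℝ → ℝ) (t x : ℝ) : ℝ :=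
  μ (ρ t x) / ρ t x * partialX ρ t x

section BD

variable {μ : ℝ → ℝ} {ρ u : ℝ → ℝ → ℝ}

theorem contDiff_bdCorrection (hμ : ContDiffOn ℝ 1 μ (Ioi 0)) (hρ : ContDiff ℝ 2 (uncurry ρ))
    (hρpos : ∀ t x, 0 < ρ t x) : ContDiff ℝ 1 (uncurry (bdCorrection μ ρ)) := by
  have hρ1 : ContDiff ℝ 1 (uncurry ρ) := hρ.of_le (by norm_num)
  exact ((hμ.comp_contDiff hρ1 fun q => hρpos q.1 q.2).div hρ1 fun q => (hρpos q.1 q.2).ne').mul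
    (contDiff_partialX hρ (by norm_num))

theorem mul_deriv_integral_comp_eq_bdCorrection (hμ : ContinuousOn μ (Ioi 0))
    (hρ : Differentiable ℝ (uncurry ρ)) {t x : ℝ} (hρpos : 0 < ρ t x) :
    ρ t x * deriv (fun y => ∫ s in (1:ℝ)..ρ t y, μ s / s ^ 2) x = bdCorrection μ ρ t x := by
  have hφ' : HasDerivAt (fun z => ∫ s in (1:ℝ)..z, μ s / s ^ 2) (μ (ρ t x) / ρ t x ^ 2) (ρ t x) :=
    hasDerivAt_integral_of_continuousOn isOpen_Ioi
      (hμ.div (continuousOn_pow 2) fun z hz => pow_ne_zero 2 (ne_of_gt hz))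
      (ordConnected_Ioi.uIcc_subset one_pos hρpos)
  have hφρ : HasDerivAt (fun y => ∫ s in (1:ℝ)..ρ t y, μ s / s ^ 2)
      (μ (ρ t x) / ρ t x ^ 2 * partialX ρ t x) x :=
    hφ'.comp x (hasDerivAt_partialX hρ t x)
  rw [hφρ.deriv, bdCorrection]
  field_simp

theorem renormalized_mass_equation (hρ : Differentiable ℝ (uncurry ρ))
    (hu : Differentiable ℝ (uncurry u)) {t y : ℝ} (hρ0 : ρ t y ≠ 0)
    (hcont : partialT ρ t y + partialX (fun t x => ρ t x * u t x) t y = 0) :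
    μ (ρ t y) / ρ t y * partialT ρ t y
      = -(u t y * bdCorrection μ ρ t y + μ (ρ t y) * partialX u t y) := by
  have hmassflux : partialX (fun t x => ρ t x * u t x) t y
      = partialX ρ t y * u t y + ρ t y * partialX u t y :=
    ((hasDerivAt_partialX hρ t y).mul (hasDerivAt_partialX hu t y)).deriv
  rw [show partialT ρ t y = -(partialX ρ t y * u t y + ρ t y * partialX u t y) by linarith,
    bdCorrection]
  field_simp

theorem bresch_desjardins_identity (hμ : ContDiffOn ℝ 1 μ (Ioi 0)) (hρ : ContDiff ℝ 2 (uncurry ρ))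
    (hu : ContDiff ℝ 2 (uncurry u)) (hρpos : ∀ t x, 0 < ρ t x) {t : ℝ}
    (hcont : ∀ x, partialT ρ t x + partialX (fun t x => ρ t x * u t x) t x = 0) (x : ℝ) :
    partialT (bdCorrection μ ρ) t x + partialX (fun t x => u t x * bdCorrection μ ρ t x) t x
      + partialX (fun t x => μ (ρ t x) * partialX u t x) t x = 0 := by
  have hρ1 : Differentiable ℝ (uncurry ρ) := hρ.differentiable two_ne_zero
  have hu1 : Differentiable ℝ (uncurry u) := hu.differentiable two_ne_zero
  have huG : Differentiable ℝ (uncurry fun t x => u t x * bdCorrection μ ρ t x) :=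
    hu1.mul ((contDiff_bdCorrection hμ hρ hρpos).differentiable one_ne_zero)
  have hvisc : Differentiable ℝ (uncurry fun t x => μ (ρ t x) * partialX u t x) :=
    ((hμ.comp_contDiff (hρ.of_le (by norm_num)) fun q => hρpos q.1 q.2).mul
      (contDiff_partialX hu (by norm_num))).differentiable one_ne_zero
  have hrenorm : (fun y => μ (ρ t y) / ρ t y * partialT ρ t y)
      = fun y => -(u t y * bdCorrection μ ρ t y + μ (ρ t y) * partialX u t y) :=
    funext fun y => renormalized_mass_equation hρ1 hu1 (hρpos t y).ne' (hcont y)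
  have hdiv : partialX (fun t y => μ (ρ t y) / ρ t y * partialT ρ t y) t x
      = -(partialX (fun t x => u t x * bdCorrection μ ρ t x) t x
        + partialX (fun t x => μ (ρ t x) * partialX u t x) t x) := by
    rw [partialX, hrenorm]
    exact ((hasDerivAt_partialX huG t x).add (hasDerivAt_partialX hvisc t x)).neg.deriv
  have hμ' : DifferentiableAt ℝ (fun z => μ z / z) (ρ t x) :=
    ((hμ.differentiableOn one_ne_zero).differentiableAt (Ioi_mem_nhds (hρpos t x))).div
      differentiableAt_id (hρpos t x).ne'
  have hclairaut : partialT (bdCorrection μ ρ) t x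
      = partialX (fun t y => μ (ρ t y) / ρ t y * partialT ρ t y) t x :=
    partialT_comp_mul_partialX hρ hμ'
  rw [hclairaut, hdiv]
  ring

end BD

theorem BD_entropy_identity_general
    (T : ℝ)
    (p μ : ℝ → ℝ)
    (hμ : ContDiffOn ℝ 1 μ (Ioi 0))
    (φ : ℝ → ℝ) (hφ : φ = fun z => ∫ s in (1:ℝ)..z, μ s / s ^ 2)
    (ρ u : ℝ → ℝ → ℝ)
    (hρ : ContDiff ℝ 2 (fun q : ℝ × ℝ => ρ q.1 q.2))
    (hu : ContDiff ℝ 2 (fun q : ℝ × ℝ => u q.1 q.2))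
    (hρpos : ∀ t x, 0 < ρ t x)
    (hcont : ∀ t ∈ Icc (0:ℝ) T, ∀ x : ℝ,
      deriv (fun s => ρ s x) t + deriv (fun y => ρ t y * u t y) x = 0)
    (hmom : ∀ t ∈ Icc (0:ℝ) T, ∀ x : ℝ,
      deriv (fun s => ρ s x * u s x) t + deriv (fun y => ρ t y * u t y ^ 2) x
        = deriv (fun y => μ (ρ t y) * deriv (fun y' => u t y') y) x
          - deriv (fun y => p (ρ t y)) x)
    (v : ℝ → ℝ → ℝ)
    (hv : v = fun t x => u t x + deriv (fun y => φ (ρ t y)) x) :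
    ∀ t ∈ Icc (0:ℝ) T, ∀ x : ℝ,
      deriv (fun s => ρ s x * v s x) t
        + deriv (fun y => ρ t y * u t y * v t y) x
        + deriv (fun y => p (ρ t y)) x = 0 := by
  intro t ht x
  have hρ1 : Differentiable ℝ (uncurry ρ) := hρ.differentiable two_ne_zero
  have hG : Differentiable ℝ (uncurry (bdCorrection μ ρ)) :=
    (contDiff_bdCorrection hμ hρ hρpos).differentiable one_ne_zero
  have hρv : ∀ s y, ρ s y * v s y = ρ s y * u s y + bdCorrection μ ρ s y := by
    intro s y
    rw [← mul_deriv_integral_comp_eq_bdCorrection hμ.continuousOn hρ1 (hρpos s y), hv, hφ,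
      mul_add]
  have hmass : (fun s => ρ s x * v s x) = fun s => ρ s x * u s x + bdCorrection μ ρ s x :=
    funext fun s => hρv s x
  have hflux : (fun y => ρ t y * u t y * v t y)
      = fun y => ρ t y * u t y ^ 2 + u t y * bdCorrection μ ρ t y := by
    funext y
    rw [mul_right_comm, hρv]
    ring
  have hbd := bresch_desjardins_identity hμ hρ hu hρpos (hcont t ht) x
  have hu1 : Differentiable ℝ (uncurry u) := hu.differentiable two_ne_zero
  have hρu : Differentiable ℝ (uncurry fun t x => ρ t x * u t x) := hρ1.mul hu1
  have hρuu : Differentiable ℝ (uncurry fun t x => ρ t x * u t x ^ 2) := hρ1.mul (hu1.pow 2)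
  have huG : Differentiable ℝ (uncurry fun t x => u t x * bdCorrection μ ρ t x) := hu1.mul hG
  rw [hmass, hflux, deriv_fun_add (hasDerivAt_partialT hρu t x).differentiableAt
      (hasDerivAt_partialT hG t x).differentiableAt,
    deriv_fun_add (hasDerivAt_partialX hρuu t x).differentiableAt
      (hasDerivAt_partialX huG t x).differentiableAt]
  unfold partialT partialX at hbd
  linarith [hmom t ht x]

theorem BD_entropy_identity
    (T : ℝ) (hT : 0 < T)
    (p μ : ℝ → ℝ)
    (hp : ContDiffOn ℝ 1 p (Ioi 0)) (hμ : ContDiffOn ℝ 1 μ (Ioi 0))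
    (hμpos : ∀ z, 0 < z → 0 < μ z)
    (φ : ℝ → ℝ) (hφ : φ = fun z => ∫ s in (1:ℝ)..z, μ s / s ^ 2)
    (ρ u : ℝ → ℝ → ℝ)
    (hρ : ContDiff ℝ 2 (fun q : ℝ × ℝ => ρ q.1 q.2))
    (hu : ContDiff ℝ 2 (fun q : ℝ × ℝ => u q.1 q.2))
    (hρpos : ∀ t x, 0 < ρ t x)
    (hcont : ∀ t ∈ Icc (0:ℝ) T, ∀ x : ℝ,
      deriv (fun s => ρ s x) t + deriv (fun y => ρ t y * u t y) x = 0)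
    (hmom : ∀ t ∈ Icc (0:ℝ) T, ∀ x : ℝ,
      deriv (fun s => ρ s x * u s x) t + deriv (fun y => ρ t y * u t y ^ 2) x
        = deriv (fun y => μ (ρ t y) * deriv (fun y' => u t y') y) x
          - deriv (fun y => p (ρ t y)) x)
    (v : ℝ → ℝ → ℝ)
    (hv : v = fun t x => u t x + deriv (fun y => φ (ρ t y)) x) :
    ∀ t ∈ Icc (0:ℝ) T, ∀ x : ℝ,
      deriv (fun s => ρ s x * v s x) t
        + deriv (fun y => ρ t y * u t y * v t y) x
        + deriv (fun y => p (ρ t y)) x = 0 :=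
  BD_entropy_identity_general T p μ hμ φ hφ ρ u hρ hu hρpos hcont hmom v hv
end

section
/- Under the hypotheses of the BD entropy identity, and assuming additionally p'(z) ≥ 0 for all z > 0, the effective velocity v = u + ∂ₓφ(ρ) satisfies pointwise ∂ₜ(ρv) + ∂ₓ(ρuv) + (p'(ρ)ρ²/μ(ρ))·v = (p'(ρ)ρ²/μ(ρ))·u. -/
open Set intervalIntegral

open Function

/-! Let `Ψ` be an antiderivative of `μ(z)/z` on `(0, ∞)`. Then `ρ v = ρ u + ∂ₓΨ(ρ)` and
`ρ u v = ρ u² + u ∂ₓΨ(ρ)`. The continuity equation gives `∂ₜΨ(ρ) = -(u ∂ₓΨ(ρ) + μ(ρ) ∂ₓu)`;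
differentiating in `x` and exchanging the mixed partials of the `C²` function `Ψ(ρ)` turns
`∂ₜ(ρv) + ∂ₓ(ρuv)` into the momentum flux `∂ₜ(ρu) + ∂ₓ(ρu²)` minus the viscous term, which is
`-∂ₓp(ρ)` by the momentum equation. Finally `∂ₓp(ρ) = p'(ρ) ∂ₓρ = (p'(ρ)ρ²/μ(ρ)) (v - u)`,
since `v - u = μ(ρ) ∂ₓρ / ρ²`. -/

section PartialDerivatives

variable {E : Type*} [NormedAddCommGroup E] [NormedSpace ℝ E] {t x : ℝ}

theorem HasFDerivAt.hasDerivAt_prodMk_left {g : ℝ × ℝ → E} {g' : ℝ × ℝ →L[ℝ] E}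
    (hg : HasFDerivAt g g' (t, x)) : HasDerivAt (fun s => g (s, x)) (g' (1, 0)) t :=
  hg.comp_hasDerivAt (f := fun s => (s, x)) t ((hasDerivAt_id t).prodMk (hasDerivAt_const t x))

theorem HasFDerivAt.hasDerivAt_prodMk_right {g : ℝ × ℝ → E} {g' : ℝ × ℝ →L[ℝ] E}
    (hg : HasFDerivAt g g' (t, x)) : HasDerivAt (fun y => g (t, y)) (g' (0, 1)) x :=
  hg.comp_hasDerivAt (f := fun y => (t, y)) x ((hasDerivAt_const x t).prodMk (hasDerivAt_id x))

variable {f : ℝ → ℝ → E} {n : WithTop ℕ∞}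

theorem ContDiff.differentiableAt_curry_fst (hf : ContDiff ℝ n (uncurry f)) (hn : n ≠ 0) :
    DifferentiableAt ℝ (fun s => f s x) t :=
  (hf.differentiable hn _).hasFDerivAt.hasDerivAt_prodMk_left.differentiableAt

theorem ContDiff.differentiableAt_curry_snd (hf : ContDiff ℝ n (uncurry f)) (hn : n ≠ 0) :
    DifferentiableAt ℝ (fun y => f t y) x :=
  (hf.differentiable hn _).hasFDerivAt.hasDerivAt_prodMk_right.differentiableAt

theorem ContDiff.deriv_curry_snd (hf : ContDiff ℝ (n + 1) (uncurry f)) :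
    ContDiff ℝ n (uncurry fun t x => deriv (fun y => f t y) x) := by
  have hd : Differentiable ℝ (uncurry f) := hf.differentiable (by simp)
  have heq : (uncurry fun t x => deriv (fun y => f t y) x)
      = fun q => fderiv ℝ (uncurry f) q (0, 1) :=
    funext fun q => (hd q).hasFDerivAt.hasDerivAt_prodMk_right.deriv
  rw [heq]
  exact (hf.fderiv_right le_rfl).clm_apply contDiff_const

theorem deriv_deriv_comm (hf : ContDiff ℝ 2 (uncurry f)) :
    deriv (fun s => deriv (fun y => f s y) x) t = deriv (fun y => deriv (fun s => f s y) t) x := by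
  set F := uncurry f
  have hd : Differentiable ℝ F := hf.differentiable (by simp)
  have hd' : Differentiable ℝ (fderiv ℝ F) :=
    (hf.fderiv_right (m := 1) (by norm_num)).differentiable (by simp)
  have hpartial (w : ℝ × ℝ) (q : ℝ × ℝ) :
      HasFDerivAt (fun q => fderiv ℝ F q w) ((fderiv ℝ (fderiv ℝ F) q).flip w) q := by
    simpa using (hd' q).hasFDerivAt.clm_apply (hasFDerivAt_const w q)
  have hx : (fun s => deriv (fun y => f s y) x) = fun s => fderiv ℝ F (s, x) (0, 1) :=
    funext fun s => (hd _).hasFDerivAt.hasDerivAt_prodMk_right.deriv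
  have ht : (fun y => deriv (fun s => f s y) t) = fun y => fderiv ℝ F (t, y) (1, 0) :=
    funext fun y => (hd _).hasFDerivAt.hasDerivAt_prodMk_left.deriv
  rw [hx, ht, (hpartial _ _).hasDerivAt_prodMk_left.deriv,
    (hpartial _ _).hasDerivAt_prodMk_right.deriv]
  exact ((hf.contDiffAt).isSymmSndFDerivAt (by simp)) _ _

end PartialDerivatives

section Antiderivatives

variable {E : Type*} [NormedAddCommGroup E] [NormedSpace ℝ E] [CompleteSpace E]
  {g : ℝ → E} {s : Set ℝ}

theorem ContinuousOn.hasDerivAt_intervalIntegral (hg : ContinuousOn g s) (hs : IsOpen s)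
    (hs' : s.OrdConnected) {a z : ℝ} (ha : a ∈ s) (hz : z ∈ s) :
    HasDerivAt (fun w => ∫ r in a..w, g r) (g z) z :=
  integral_hasDerivAt_right ((hg.mono (hs'.uIcc_subset ha hz)).intervalIntegrable)
    (hg.stronglyMeasurableAtFilter hs z hz) (hg.continuousAt (hs.mem_nhds hz))

theorem ContDiffOn.exists_hasDerivAt {n : ℕ} (hg : ContDiffOn ℝ n g s) (hs : IsOpen s)
    (hs' : s.OrdConnected) (hne : s.Nonempty) :
    ∃ G : ℝ → E, ContDiffOn ℝ (n + 1) G s ∧ ∀ z ∈ s, HasDerivAt G (g z) z := by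
  obtain ⟨a, ha⟩ := hne
  have hG : ∀ z ∈ s, HasDerivAt (fun w => ∫ r in a..w, g r) (g z) z :=
    fun z hz => hg.continuousOn.hasDerivAt_intervalIntegral hs hs' ha hz
  refine ⟨_, (contDiffOn_succ_iff_deriv_of_isOpen hs).2 ⟨?_, by simp, ?_⟩, hG⟩
  · exact fun z hz => (hG z hz).differentiableAt.differentiableWithinAt
  · exact hg.congr fun z hz => (hG z hz).deriv

end Antiderivatives

section ContinuityEquation

variable {ρ u : ℝ → ℝ → ℝ} {t x : ℝ}

theorem deriv_comp_of_continuity {G : ℝ → ℝ} (hG : DifferentiableAt ℝ G (ρ t x))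
    (hρt : DifferentiableAt ℝ (fun s => ρ s x) t) (hρx : DifferentiableAt ℝ (fun y => ρ t y) x)
    (hux : DifferentiableAt ℝ (fun y => u t y) x)
    (hcont : deriv (fun s => ρ s x) t + deriv (fun y => ρ t y * u t y) x = 0) :
    deriv (fun s => G (ρ s x)) t
      = -(u t x * deriv (fun y => G (ρ t y)) x
          + ρ t x * deriv G (ρ t x) * deriv (fun y => u t y) x) := by
  have hGt : HasDerivAt (fun s => G (ρ s x)) (deriv G (ρ t x) * deriv (fun s => ρ s x) t) t :=
    hG.hasDerivAt.comp t hρt.hasDerivAt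
  have hGx : HasDerivAt (fun y => G (ρ t y)) (deriv G (ρ t x) * deriv (fun y => ρ t y) x) x :=
    hG.hasDerivAt.comp x hρx.hasDerivAt
  have hflux : HasDerivAt (fun y => ρ t y * u t y)
      (deriv (fun y => ρ t y) x * u t x + ρ t x * deriv (fun y => u t y) x) x :=
    hρx.hasDerivAt.mul hux.hasDerivAt
  rw [hflux.deriv] at hcont
  rw [hGt.deriv, hGx.deriv]
  linear_combination deriv G (ρ t x) * hcont

theorem deriv_deriv_comp_add_deriv_of_continuity {G : ℝ → ℝ} (hG : ContDiffOn ℝ 2 G (Ioi 0))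
    (hρ : ContDiff ℝ 2 (uncurry ρ)) (hu : ContDiff ℝ 2 (uncurry u)) (hρpos : ∀ t x, 0 < ρ t x)
    (hcont : ∀ y, deriv (fun s => ρ s y) t + deriv (fun y' => ρ t y' * u t y') y = 0) :
    deriv (fun s => deriv (fun y => G (ρ s y)) x) t
        + deriv (fun y => u t y * deriv (fun y' => G (ρ t y')) y) x
      = -deriv (fun y => ρ t y * deriv G (ρ t y) * deriv (fun y' => u t y') y) x := by
  have hGρ : ContDiff ℝ 2 (uncurry fun s y => G (ρ s y)) :=
    hG.comp_contDiff hρ fun q => hρpos q.1 q.2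
  have hG' : ContDiffOn ℝ 1 (deriv G) (Ioi 0) :=
    ((contDiffOn_succ_iff_deriv_of_isOpen isOpen_Ioi).1 hG).2.2
  have hux : ContDiff ℝ 1 (uncurry fun s y => deriv (fun y' => u s y') y) :=
    hu.deriv_curry_snd (n := 1)
  have hρx : DifferentiableAt ℝ (fun y => ρ t y) x := hρ.differentiableAt_curry_snd two_ne_zero
  have hflux : DifferentiableAt ℝ (fun y => u t y * deriv (fun y' => G (ρ t y')) y) x :=
    ContDiff.differentiableAt_curry_snd (f := fun s y => u s y * deriv (fun y' => G (ρ s y')) y)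
      ((hu.of_le one_le_two).mul (hGρ.deriv_curry_snd (n := 1))) one_ne_zero
  have hvisc :
      DifferentiableAt ℝ (fun y => ρ t y * deriv G (ρ t y) * deriv (fun y' => u t y') y) x :=
    (hρx.mul (((hG'.contDiffAt (Ioi_mem_nhds (hρpos t x))).differentiableAt one_ne_zero).comp x
      hρx)).mul (hux.differentiableAt_curry_snd one_ne_zero)
  have hrenorm : (fun y => deriv (fun s => G (ρ s y)) t)
      = fun y => -(u t y * deriv (fun y' => G (ρ t y')) y
          + ρ t y * deriv G (ρ t y) * deriv (fun y' => u t y') y) :=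
    funext fun y => deriv_comp_of_continuity
      ((hG.contDiffAt (Ioi_mem_nhds (hρpos t y))).differentiableAt two_ne_zero)
      (hρ.differentiableAt_curry_fst two_ne_zero) (hρ.differentiableAt_curry_snd two_ne_zero)
      (hu.differentiableAt_curry_snd two_ne_zero) (hcont y)
  rw [deriv_deriv_comm hGρ, hrenorm, deriv.fun_neg, deriv_fun_add hflux hvisc]
  ring

theorem effective_momentum_balance {μ φ : ℝ → ℝ} {v : ℝ → ℝ → ℝ}
    (hμ : ContDiffOn ℝ 1 μ (Ioi 0)) (hφ : ∀ z, 0 < z → HasDerivAt φ (μ z / z ^ 2) z)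
    (hρ : ContDiff ℝ 2 (uncurry ρ)) (hu : ContDiff ℝ 2 (uncurry u)) (hρpos : ∀ t x, 0 < ρ t x)
    (hcont : ∀ y, deriv (fun s => ρ s y) t + deriv (fun y' => ρ t y' * u t y') y = 0)
    (hv : v = fun t x => u t x + deriv (fun y => φ (ρ t y)) x) :
    deriv (fun s => ρ s x * v s x) t + deriv (fun y => ρ t y * u t y * v t y) x
      = deriv (fun s => ρ s x * u s x) t + deriv (fun y => ρ t y * u t y ^ 2) x
        - deriv (fun y => μ (ρ t y) * deriv (fun y' => u t y') y) x := by
  obtain ⟨Ψ, hΨ, hΨ'⟩ : ∃ Ψ : ℝ → ℝ, ContDiffOn ℝ 2 Ψ (Ioi 0) ∧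
      ∀ z ∈ Ioi 0, HasDerivAt Ψ (μ z / z) z :=
    (hμ.div contDiffOn_id fun z hz => (mem_Ioi.1 hz).ne').exists_hasDerivAt (n := 1)
      isOpen_Ioi ordConnected_Ioi nonempty_Ioi
  have hμρ (y : ℝ) : ρ t y * deriv Ψ (ρ t y) = μ (ρ t y) := by
    have := (hρpos t y).ne'
    rw [(hΨ' _ (hρpos t y)).deriv]
    field_simp
  have hBD := deriv_deriv_comp_add_deriv_of_continuity (x := x) hΨ hρ hu hρpos hcont
  simp only [hμρ] at hBD
  set w := fun s y => deriv (fun y' => Ψ (ρ s y')) y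
  have hw (s y : ℝ) : w s y = μ (ρ s y) / ρ s y * deriv (fun y' => ρ s y') y :=
    ((hΨ' _ (hρpos s y)).comp y (hρ.differentiableAt_curry_snd two_ne_zero).hasDerivAt).deriv
  have hρv (s y : ℝ) : ρ s y * v s y = ρ s y * u s y + w s y := by
    have hφρ : HasDerivAt (fun y' => φ (ρ s y'))
        (μ (ρ s y) / ρ s y ^ 2 * deriv (fun y' => ρ s y') y) y :=
      (hφ _ (hρpos s y)).comp y (hρ.differentiableAt_curry_snd two_ne_zero).hasDerivAt
    have := (hρpos s y).ne'
    simp only [hv, hw, hφρ.deriv]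
    field_simp
  have hρuv (s y : ℝ) : ρ s y * u s y * v s y = ρ s y * u s y ^ 2 + u s y * w s y := by
    linear_combination u s y * hρv s y
  have hw1 : ContDiff ℝ 1 (uncurry w) :=
    (hΨ.comp_contDiff hρ fun q => hρpos q.1 q.2).deriv_curry_snd
  have hρu_t : DifferentiableAt ℝ (fun s => ρ s x * u s x) t :=
    ContDiff.differentiableAt_curry_fst (f := fun s y => ρ s y * u s y) (hρ.mul hu) two_ne_zero
  have hw_t : DifferentiableAt ℝ (fun s => w s x) t := hw1.differentiableAt_curry_fst one_ne_zero
  have hρu2_x : DifferentiableAt ℝ (fun y => ρ t y * u t y ^ 2) x :=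
    ContDiff.differentiableAt_curry_snd (f := fun s y => ρ s y * u s y ^ 2) (hρ.mul (hu.pow 2))
      two_ne_zero
  have huw_x : DifferentiableAt ℝ (fun y => u t y * w t y) x :=
    ContDiff.differentiableAt_curry_snd (f := fun s y => u s y * w s y)
      ((hu.of_le one_le_two).mul hw1) one_ne_zero
  calc deriv (fun s => ρ s x * v s x) t + deriv (fun y => ρ t y * u t y * v t y) x
      = deriv (fun s => ρ s x * u s x) t + deriv (fun y => ρ t y * u t y ^ 2) x
        + (deriv (fun s => w s x) t + deriv (fun y => u t y * w t y) x) := by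
        simp only [hρv, hρuv]
        rw [deriv_fun_add hρu_t hw_t, deriv_fun_add hρu2_x huw_x]
        ring
    _ = _ := by
        rw [hBD]
        ring

end ContinuityEquation

theorem Haspot_damping_identity_general
    (T : ℝ)
    (p μ : ℝ → ℝ)
    (hp : ContDiffOn ℝ 1 p (Ioi 0)) (hμ : ContDiffOn ℝ 1 μ (Ioi 0))
    (hμpos : ∀ z, 0 < z → 0 < μ z)
    (φ : ℝ → ℝ) (hφ : φ = fun z => ∫ s in (1:ℝ)..z, μ s / s ^ 2)
    (ρ u : ℝ → ℝ → ℝ)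
    (hρ : ContDiff ℝ 2 (fun q : ℝ × ℝ => ρ q.1 q.2))
    (hu : ContDiff ℝ 2 (fun q : ℝ × ℝ => u q.1 q.2))
    (hρpos : ∀ t x, 0 < ρ t x)
    (hcont : ∀ t ∈ Icc (0:ℝ) T, ∀ x : ℝ,
      deriv (fun s => ρ s x) t + deriv (fun y => ρ t y * u t y) x = 0)
    (hmom : ∀ t ∈ Icc (0:ℝ) T, ∀ x : ℝ,
      deriv (fun s => ρ s x * u s x) t + deriv (fun y => ρ t y * u t y ^ 2) x
        = deriv (fun y => μ (ρ t y) * deriv (fun y' => u t y') y) x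
          - deriv (fun y => p (ρ t y)) x)
    (v : ℝ → ℝ → ℝ)
    (hv : v = fun t x => u t x + deriv (fun y => φ (ρ t y)) x) :
    ∀ t ∈ Icc (0:ℝ) T, ∀ x : ℝ,
      deriv (fun s => ρ s x * v s x) t
        + deriv (fun y => ρ t y * u t y * v t y) x
        + (deriv p (ρ t x) * ρ t x ^ 2 / μ (ρ t x)) * v t x
        = (deriv p (ρ t x) * ρ t x ^ 2 / μ (ρ t x)) * u t x := by
  intro t ht x
  have hφ' (z : ℝ) (hz : 0 < z) : HasDerivAt φ (μ z / z ^ 2) z :=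
    hφ ▸ (hμ.continuousOn.div (continuousOn_id.pow 2) fun s hs => pow_ne_zero 2 (ne_of_gt hs)
      ).hasDerivAt_intervalIntegral isOpen_Ioi ordConnected_Ioi (mem_Ioi.2 one_pos) hz
  have hρx : DifferentiableAt ℝ (fun y => ρ t y) x :=
    ContDiff.differentiableAt_curry_snd (f := ρ) hρ two_ne_zero
  have hpρ : deriv (fun y => p (ρ t y)) x = deriv p (ρ t x) * deriv (fun y => ρ t y) x :=
    ((hp.contDiffAt (Ioi_mem_nhds (hρpos t x))).differentiableAt one_ne_zero).hasDerivAt.comp x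
      hρx.hasDerivAt |>.deriv
  have hφρ : HasDerivAt (fun y => φ (ρ t y))
      (μ (ρ t x) / ρ t x ^ 2 * deriv (fun y => ρ t y) x) x :=
    (hφ' _ (hρpos t x)).comp x hρx.hasDerivAt
  have hvx : v t x = u t x + μ (ρ t x) / ρ t x ^ 2 * deriv (fun y => ρ t y) x := by
    simp only [hv, hφρ.deriv]
  have := (hρpos t x).ne'
  have := (hμpos _ (hρpos t x)).ne'
  rw [effective_momentum_balance hμ hφ' hρ hu hρpos (hcont t ht) hv, hmom t ht x, hpρ, hvx]
  field_simp
  ring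

theorem Haspot_damping_identity
    (T : ℝ) (hT : 0 < T)
    (p μ : ℝ → ℝ)
    (hp : ContDiffOn ℝ 1 p (Ioi 0)) (hμ : ContDiffOn ℝ 1 μ (Ioi 0))
    (hμpos : ∀ z, 0 < z → 0 < μ z)
    (hp' : ∀ z, 0 < z → 0 ≤ deriv p z)
    (φ : ℝ → ℝ) (hφ : φ = fun z => ∫ s in (1:ℝ)..z, μ s / s ^ 2)
    (ρ u : ℝ → ℝ → ℝ)
    (hρ : ContDiff ℝ 2 (fun q : ℝ × ℝ => ρ q.1 q.2))
    (hu : ContDiff ℝ 2 (fun q : ℝ × ℝ => u q.1 q.2))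
    (hρpos : ∀ t x, 0 < ρ t x)
    (hcont : ∀ t ∈ Icc (0:ℝ) T, ∀ x : ℝ,
      deriv (fun s => ρ s x) t + deriv (fun y => ρ t y * u t y) x = 0)
    (hmom : ∀ t ∈ Icc (0:ℝ) T, ∀ x : ℝ,
      deriv (fun s => ρ s x * u s x) t + deriv (fun y => ρ t y * u t y ^ 2) x
        = deriv (fun y => μ (ρ t y) * deriv (fun y' => u t y') y) x
          - deriv (fun y => p (ρ t y)) x)
    (v : ℝ → ℝ → ℝ)
    (hv : v = fun t x => u t x + deriv (fun y => φ (ρ t y)) x) :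
    ∀ t ∈ Icc (0:ℝ) T, ∀ x : ℝ,
      deriv (fun s => ρ s x * v s x) t
        + deriv (fun y => ρ t y * u t y * v t y) x
        + (deriv p (ρ t x) * ρ t x ^ 2 / μ (ρ t x)) * v t x
        = (deriv p (ρ t x) * ρ t x ^ 2 / μ (ρ t x)) * u t x :=
  Haspot_damping_identity_general T p μ hp hμ hμpos φ hφ ρ u hρ hu hρpos hcont hmom v hv
end

section
/- Let L > 0 and let ρ : [0,T] × ℝ → ℝ be a strictly positive C¹ function, L-periodic in x, and u : [0,T] × ℝ → ℝ a C¹ function, L-periodic in x, satisfying ∂ₜρ + ∂ₓ(ρu) = 0. Then for all t ∈ [0,T]: sup_x ρ(t,x) ≤ (sup_x ρ(0,x)) · exp(∫₀ᵗ ‖∂ₓu(s,·)‖_{L∞} ds) and inf_x ρ(t,x) ≥ (inf_x ρ(0,x)) · exp(−∫₀ᵗ ‖∂ₓu(s,·)‖_{L∞} ds). -/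
/-!
Work with `w = log ρ`. Where `ρ(t, ·)` attains its maximum or minimum, `∂ₓρ = 0`, so the
continuity equation reduces there to `∂ₜ w = -∂ₓu`. By a Danskin-type argument, the right
Dini derivatives of `t ↦ max w(t, ·)` and `t ↦ max (-w)(t, ·)` (the maxima are attained by
periodicity) are therefore bounded by `‖∂ₓu(t, ·)‖_∞`; integrating this bound and
exponentiating gives both estimates.
-/

open Set Filter Topology Function Real

section PartialDerivatives

variable {f : ℝ → ℝ → ℝ}

lemma hasDerivAt_left_of_contDiff (hf : ContDiff ℝ 1 (uncurry f)) (t x : ℝ) :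
    HasDerivAt (fun s => f s x) (fderiv ℝ (uncurry f) (t, x) (1, 0)) t := by
  have := (hf.differentiable one_ne_zero (t, x)).hasFDerivAt.comp_hasDerivAt t
    ((hasDerivAt_id t).prodMk (hasDerivAt_const t x))
  exact this

lemma hasDerivAt_right_of_contDiff (hf : ContDiff ℝ 1 (uncurry f)) (t x : ℝ) :
    HasDerivAt (fun y => f t y) (fderiv ℝ (uncurry f) (t, x) (0, 1)) x := by
  have := (hf.differentiable one_ne_zero (t, x)).hasFDerivAt.comp_hasDerivAt x
    ((hasDerivAt_const x t).prodMk (hasDerivAt_id x))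
  exact this

lemma continuous_deriv_left_of_contDiff (hf : ContDiff ℝ 1 (uncurry f)) :
    Continuous fun q : ℝ × ℝ => deriv (fun s => f s q.2) q.1 := by
  simp only [fun q : ℝ × ℝ => (hasDerivAt_left_of_contDiff hf q.1 q.2).deriv]
  exact (hf.continuous_fderiv one_ne_zero).clm_apply continuous_const

lemma continuous_deriv_right_of_contDiff (hf : ContDiff ℝ 1 (uncurry f)) :
    Continuous fun q : ℝ × ℝ => deriv (fun y => f q.1 y) q.2 := by
  simp only [fun q : ℝ × ℝ => (hasDerivAt_right_of_contDiff hf q.1 q.2).deriv]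
  exact (hf.continuous_fderiv one_ne_zero).clm_apply continuous_const

end PartialDerivatives

theorem eventually_slope_sSup_image_lt {X : Type*} [TopologicalSpace X]
    [FirstCountableTopology X]
    {s : Set X} (hs : IsCompact s) (hne : s.Nonempty) {F F' : ℝ → X → ℝ}
    (hF : Continuous (uncurry F)) (hF' : Continuous (uncurry F'))
    (hderiv : ∀ t x, HasDerivAt (F · x) (F' t x) t) {τ r : ℝ}
    (hr : ∀ x ∈ s, IsMaxOn (F τ) s x → F' τ x < r) :
    ∀ᶠ z in 𝓝[>] τ, slope (fun t => sSup (F t '' s)) τ z < r := by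
  -- Otherwise pick `z n ↓ τ` with slopes `≥ r` and maximizers `x n` of `F (z n)`: by the mean
  -- value theorem, a limit point `x₀` of `x n` maximizes `F τ` and has `r ≤ F' τ x₀`.
  by_contra h
  simp only [not_eventually, not_lt] at h
  obtain ⟨z, hzτ, hz⟩ := exists_seq_forall_of_frequently (h.and_eventually self_mem_nhdsWithin)
  choose x hxs hxmax using fun n =>
    hs.exists_isMaxOn hne (hF.comp (Continuous.prodMk_right (z n))).continuousOn
  obtain ⟨x₀, hx₀, φ, hφ, hxφ⟩ := hs.tendsto_subseq hxs
  have hbdd : ∀ t, BddAbove (F t '' s) := fun t =>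
    (hs.image (hF.comp (Continuous.prodMk_right t))).bddAbove
  choose ξ hξ hξeq using fun n => exists_hasDerivAt_eq_slope (F · (x n)) (F' · (x n)) (hz n).2
    (hF.comp (continuous_id.prodMk continuous_const)).continuousOn fun t _ => hderiv t (x n)
  have hr_le : ∀ n, r ≤ F' (ξ n) (x n) := fun n => by
    have hsup : sSup (F (z n) '' s) = F (z n) (x n) :=
      IsGreatest.csSup_eq ⟨mem_image_of_mem _ (hxs n), by
        rintro _ ⟨y, hy, rfl⟩; exact hxmax n hy⟩
    calc r ≤ slope (fun t => sSup (F t '' s)) τ (z n) := (hz n).1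
      _ ≤ (F (z n) (x n) - F τ (x n)) / (z n - τ) := by
        rw [slope_def_field, hsup]
        gcongr
        · exact sub_nonneg.2 (hz n).2.le
        · exact le_csSup (hbdd τ) (mem_image_of_mem _ (hxs n))
      _ = F' (ξ n) (x n) := (hξeq n).symm
  have hzφ : Tendsto (z ∘ φ) atTop (𝓝 τ) :=
    (tendsto_nhdsWithin_iff.1 hzτ).1.comp hφ.tendsto_atTop
  have hξφ : Tendsto (ξ ∘ φ) atTop (𝓝 τ) :=
    tendsto_of_tendsto_of_tendsto_of_le_of_le tendsto_const_nhds hzφ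
      (fun n => (hξ (φ n)).1.le) (fun n => (hξ (φ n)).2.le)
  have hr_le₀ : r ≤ F' τ x₀ :=
    ge_of_tendsto ((hF'.tendsto (τ, x₀)).comp (hξφ.prodMk_nhds hxφ))
      (Eventually.of_forall fun n => hr_le (φ n))
  have hmax₀ : IsMaxOn (F τ) s x₀ := fun y hy =>
    le_of_tendsto_of_tendsto ((hF.tendsto (τ, y)).comp (hzφ.prodMk_nhds tendsto_const_nhds))
      ((hF.tendsto (τ, x₀)).comp (hzφ.prodMk_nhds hxφ))
      (Eventually.of_forall fun n => hxmax (φ n) hy)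
  exact (hr x₀ hx₀ hmax₀).not_ge hr_le₀

namespace Function.Periodic

variable {f : ℝ → ℝ} {L : ℝ}

lemma deriv (h : Periodic f L) : Periodic (deriv f) L := fun x => by
  rw [← deriv_comp_add_const, h.funext]

lemma iSup_eq_sSup_image_Icc (h : Periodic f L) (hL : 0 < L) :
    ⨆ x, f x = sSup (f '' Icc 0 L) := by
  rw [iSup, ← h.image_Icc hL 0, zero_add]

lemma bddAbove_range (h : Periodic f L) (hL : 0 < L) (hf : Continuous f) :
    BddAbove (range f) := by
  rw [← h.image_Icc hL 0]
  exact (isCompact_Icc.image hf).bddAbove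

end Function.Periodic

section PeriodicFamily

variable {L : ℝ} {F : ℝ → ℝ → ℝ}

lemma continuous_iSup_of_periodic (hL : 0 < L) (hF : Continuous (uncurry F))
    (hper : ∀ t, Periodic (F t) L) : Continuous fun t => ⨆ x, F t x := by
  simp only [fun t => (hper t).iSup_eq_sSup_image_Icc hL]
  exact isCompact_Icc.continuous_sSup hF

lemma le_iSup_of_periodic (hL : 0 < L) (hF : Continuous (uncurry F))
    (hper : ∀ t, Periodic (F t) L) (t x : ℝ) : F t x ≤ ⨆ y, F t y :=
  le_ciSup ((hper t).bddAbove_range hL (hF.comp (Continuous.prodMk_right t))) x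

theorem iSup_le_iSup_add_integral_of_periodic (hL : 0 < L) {F' : ℝ → ℝ → ℝ} {K : ℝ → ℝ}
    {a b : ℝ} (hF : Continuous (uncurry F)) (hF' : Continuous (uncurry F'))
    (hderiv : ∀ t x, HasDerivAt (F · x) (F' t x) t) (hper : ∀ t, Periodic (F t) L)
    (hK : Continuous K) (hmax : ∀ t ∈ Ico a b, ∀ x, (∀ y, F t y ≤ F t x) → F' t x ≤ K t) :
    ∀ t ∈ Icc a b, ⨆ x, F t x ≤ (⨆ x, F a x) + ∫ s in a..t, K s := by
  have hB : ∀ t, HasDerivAt (fun t => (⨆ x, F a x) + ∫ s in a..t, K s) (K t) t :=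
    fun t => ((hK.integral_hasStrictDerivAt a t).hasDerivAt).const_add _
  refine image_le_of_liminf_slope_right_le_deriv_boundary
    (continuous_iSup_of_periodic hL hF hper).continuousOn (by simp)
    (fun t _ => (hB t).continuousAt.continuousWithinAt) (fun t _ => (hB t).hasDerivWithinAt) ?_
  intro τ hτ r hr
  simp only [fun t => (hper t).iSup_eq_sSup_image_Icc hL]
  refine (eventually_slope_sSup_image_lt isCompact_Icc (nonempty_Icc.2 hL.le) hF hF' hderiv
    fun x _ hx => (hmax τ hτ x fun y => ?_).trans_lt hr).frequently
  obtain ⟨y', hy', hyy'⟩ := (hper τ).exists_mem_Ico₀ hL y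
  exact hyy' ▸ hx (Ico_subset_Icc_self hy')

end PeriodicFamily

lemma iSup_eq_exp_iSup_log {ι : Type*} [Nonempty ι] {f : ι → ℝ} (hf : ∀ i, 0 < f i)
    (hbdd : BddAbove (range fun i => log (f i))) : ⨆ i, f i = exp (⨆ i, log (f i)) := by
  rw [Monotone.map_ciSup_of_continuousAt continuous_exp.continuousAt exp_monotone hbdd]
  simp only [exp_log (hf _)]

lemma iInf_eq_exp_neg_iSup_neg_log {ι : Type*} [Nonempty ι] {f : ι → ℝ} (hf : ∀ i, 0 < f i)
    (hbdd : BddAbove (range fun i => -log (f i))) : ⨅ i, f i = exp (-⨆ i, -log (f i)) := by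
  rw [Antitone.map_ciSup_of_continuousAt (f := fun y => exp (-y)) (by fun_prop)
    (fun _ _ h => exp_le_exp.2 (neg_le_neg h)) hbdd]
  simp only [neg_neg, exp_log (hf _)]

section ContinuityEquation

variable {L T : ℝ} {ρ u : ℝ → ℝ → ℝ}

lemma deriv_time_eq_of_deriv_space_eq_zero (hρ : ContDiff ℝ 1 (uncurry ρ))
    (hu : ContDiff ℝ 1 (uncurry u)) {t x : ℝ}
    (hcont : deriv (fun s => ρ s x) t + deriv (fun y => ρ t y * u t y) x = 0)
    (hx : deriv (fun y => ρ t y) x = 0) :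
    deriv (fun s => ρ s x) t = -(ρ t x * deriv (fun y => u t y) x) := by
  rw [deriv_fun_mul (hasDerivAt_right_of_contDiff hρ t x).differentiableAt
    (hasDerivAt_right_of_contDiff hu t x).differentiableAt, hx] at hcont
  linarith

lemma hasDerivAt_log_left (hρ : ContDiff ℝ 1 (uncurry ρ)) (hρpos : ∀ t x, 0 < ρ t x)
    (t x : ℝ) :
    HasDerivAt (fun s => log (ρ s x)) (deriv (fun s => ρ s x) t / ρ t x) t :=
  (hasDerivAt_left_of_contDiff hρ t x).differentiableAt.hasDerivAt.log (hρpos t x).ne'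

lemma continuous_deriv_left_div (hρ : ContDiff ℝ 1 (uncurry ρ)) (hρpos : ∀ t x, 0 < ρ t x) :
    Continuous (uncurry fun t x => deriv (fun s => ρ s x) t / ρ t x) :=
  (continuous_deriv_left_of_contDiff hρ).div hρ.continuous fun q => (hρpos q.1 q.2).ne'

variable (hL : 0 < L) (hρ : ContDiff ℝ 1 (uncurry ρ)) (hu : ContDiff ℝ 1 (uncurry u))
  (hρpos : ∀ t x, 0 < ρ t x) (hρper : ∀ t, Periodic (ρ t) L)
  (hcont : ∀ t ∈ Icc (0:ℝ) T, ∀ x : ℝ,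
    deriv (fun s => ρ s x) t + deriv (fun y => ρ t y * u t y) x = 0)
  {K : ℝ → ℝ} (hK : Continuous K) (hdu : ∀ s x, |deriv (fun y => u s y) x| ≤ K s)
include hL hρ hu hρpos hρper hcont hK hdu

theorem iSup_log_le_iSup_log_add_integral :
    ∀ t ∈ Icc 0 T, ⨆ x, log (ρ t x) ≤ (⨆ x, log (ρ 0 x)) + ∫ s in 0..t, K s := by
  refine iSup_le_iSup_add_integral_of_periodic hL
    (hρ.continuous.log fun q => (hρpos q.1 q.2).ne') (continuous_deriv_left_div hρ hρpos)
    (hasDerivAt_log_left hρ hρpos) (fun t => (hρper t).comp log) hK fun τ hτ x hx => ?_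
  have hmax : IsLocalMax (ρ τ) x := Eventually.of_forall fun y =>
    (log_le_log_iff (hρpos τ y) (hρpos τ x)).1 (hx y)
  rw [deriv_time_eq_of_deriv_space_eq_zero hρ hu (hcont τ (Ico_subset_Icc_self hτ) x)
    hmax.deriv_eq_zero, neg_div, mul_div_cancel_left₀ _ (hρpos τ x).ne']
  exact (neg_le_abs _).trans (hdu τ x)

theorem iSup_neg_log_le_iSup_neg_log_add_integral :
    ∀ t ∈ Icc 0 T, ⨆ x, -log (ρ t x) ≤ (⨆ x, -log (ρ 0 x)) + ∫ s in 0..t, K s := by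
  refine iSup_le_iSup_add_integral_of_periodic hL
    (F' := fun t x => -(deriv (fun s => ρ s x) t / ρ t x))
    (hρ.continuous.log fun q => (hρpos q.1 q.2).ne').neg
    (continuous_deriv_left_div hρ hρpos).neg (fun t x => (hasDerivAt_log_left hρ hρpos t x).neg)
    (fun t => (hρper t).comp fun r => -log r) hK fun τ hτ x hx => ?_
  have hmin : IsLocalMin (ρ τ) x := Eventually.of_forall fun y =>
    (log_le_log_iff (hρpos τ x) (hρpos τ y)).1 (neg_le_neg_iff.1 (hx y))
  rw [deriv_time_eq_of_deriv_space_eq_zero hρ hu (hcont τ (Ico_subset_Icc_self hτ) x)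
    hmin.deriv_eq_zero, neg_div, neg_neg, mul_div_cancel_left₀ _ (hρpos τ x).ne']
  exact (le_abs_self _).trans (hdu τ x)

end ContinuityEquation

theorem density_sup_inf_bounds_general
    (L T : ℝ) (hL : 0 < L)
    (ρ u : ℝ → ℝ → ℝ)
    (hρ : ContDiff ℝ 1 (fun q : ℝ × ℝ => ρ q.1 q.2))
    (hu : ContDiff ℝ 1 (fun q : ℝ × ℝ => u q.1 q.2))
    (hρpos : ∀ t x, 0 < ρ t x)
    (hρper : ∀ t x, ρ t (x + L) = ρ t x)
    (huper : ∀ t x, u t (x + L) = u t x)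
    (hcont : ∀ t ∈ Icc (0:ℝ) T, ∀ x : ℝ,
      deriv (fun s => ρ s x) t + deriv (fun y => ρ t y * u t y) x = 0) :
    ∀ t ∈ Icc (0:ℝ) T,
      ((⨆ x : ℝ, ρ t x) ≤ (⨆ x : ℝ, ρ 0 x) *
        Real.exp (∫ s in (0:ℝ)..t, ⨆ x : ℝ, |deriv (fun y => u s y) x|)) ∧
      ((⨅ x : ℝ, ρ 0 x) *
        Real.exp (-∫ s in (0:ℝ)..t, ⨆ x : ℝ, |deriv (fun y => u s y) x|)
          ≤ ⨅ x : ℝ, ρ t x) := by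
  intro t ht
  replace hρper : ∀ t, Periodic (ρ t) L := hρper
  replace huper : ∀ t, Periodic (u t) L := huper
  have hdu_per : ∀ s, Periodic (fun x => |deriv (fun y => u s y) x|) L :=
    fun s => ((huper s).deriv).comp abs
  have hdu_cont : Continuous (uncurry fun s x => |deriv (fun y => u s y) x|) :=
    (continuous_deriv_right_of_contDiff hu).abs
  have hK := continuous_iSup_of_periodic hL hdu_cont hdu_per
  have hdu := le_iSup_of_periodic hL hdu_cont hdu_per
  have hlog_cont : ∀ s, Continuous fun x => log (ρ s x) := fun s =>
    (hρ.continuous.comp (Continuous.prodMk_right s)).log fun x => (hρpos s x).ne'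
  have hbdd : ∀ s, BddAbove (range fun x => log (ρ s x)) := fun s =>
    ((hρper s).comp log).bddAbove_range hL (hlog_cont s)
  have hbdd' : ∀ s, BddAbove (range fun x => -log (ρ s x)) := fun s =>
    ((hρper s).comp fun r => -log r).bddAbove_range hL (hlog_cont s).neg
  rw [iSup_eq_exp_iSup_log (hρpos t) (hbdd t), iSup_eq_exp_iSup_log (hρpos 0) (hbdd 0),
    iInf_eq_exp_neg_iSup_neg_log (hρpos t) (hbdd' t),
    iInf_eq_exp_neg_iSup_neg_log (hρpos 0) (hbdd' 0), ← exp_add, ← exp_add, ← neg_add]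
  exact ⟨exp_le_exp.2
      (iSup_log_le_iSup_log_add_integral hL hρ hu hρpos hρper hcont hK hdu t ht),
    exp_le_exp.2 (neg_le_neg
      (iSup_neg_log_le_iSup_neg_log_add_integral hL hρ hu hρpos hρper hcont hK hdu t ht))⟩

theorem density_sup_inf_bounds
    (L T : ℝ) (hL : 0 < L) (hT : 0 < T)
    (ρ u : ℝ → ℝ → ℝ)
    (hρ : ContDiff ℝ 1 (fun q : ℝ × ℝ => ρ q.1 q.2))
    (hu : ContDiff ℝ 1 (fun q : ℝ × ℝ => u q.1 q.2))
    (hρpos : ∀ t x, 0 < ρ t x)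
    (hρper : ∀ t x, ρ t (x + L) = ρ t x)
    (huper : ∀ t x, u t (x + L) = u t x)
    (hcont : ∀ t ∈ Icc (0:ℝ) T, ∀ x : ℝ,
      deriv (fun s => ρ s x) t + deriv (fun y => ρ t y * u t y) x = 0) :
    ∀ t ∈ Icc (0:ℝ) T,
      ((⨆ x : ℝ, ρ t x) ≤ (⨆ x : ℝ, ρ 0 x) *
        Real.exp (∫ s in (0:ℝ)..t, ⨆ x : ℝ, |deriv (fun y => u s y) x|)) ∧
      ((⨅ x : ℝ, ρ 0 x) *
        Real.exp (-∫ s in (0:ℝ)..t, ⨆ x : ℝ, |deriv (fun y => u s y) x|)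
          ≤ ⨅ x : ℝ, ρ t x) :=
  density_sup_inf_bounds_general L T hL ρ u hρ hu hρpos hρper huper hcont
end
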